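/- Let R_opt be the unique real number R > 1 with (log R)^2 = 1/R, let f(R) = −1/R + 1/(R^2·(log R)^2), and let 1 < R_0 < R_opt. Then there exists a function R : ℝ → ℝ with R(0) = R_0 such that for every t ≥ 0 the function R is differentiable at t with derivative f(R(t)); moreover R is strictly increasing on [0, ∞), satisfies R_0 ≤ R(t) < R_opt for all t ≥ 0, and R(t) converges to R_opt as t → ∞. -/

import Mathlib

/-!
Separation of variables: with `T r = ∫_{R₀}^r dx / f x`, the solution is the inverse function of
`T`. On `(1, R_opt)` the speed `f` is positive, since `R (log R)^2` increases from `0` to its value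
`1` at `R_opt`, so `T` is strictly increasing. Convexity of `R (log R)^2` makes `f` vanish at most
linearly at `R_opt`, so `T` diverges there, the inverse is defined on all of `[0, ∞)`, and the
solution creeps up to `R_opt` without reaching it.
-/

open Set Filter Topology Function Real

theorem StrictMonoOn.hasDerivAt_invFunOn {T T' : ℝ → ℝ} {a b r : ℝ}
    (hT : StrictMonoOn T (Ioo a b)) (hderiv : ∀ x ∈ Ioo a b, HasDerivAt T (T' x) x)
    (hr : r ∈ Ioo a b) (hT' : T' r ≠ 0) :
    HasDerivAt (invFunOn T (Ioo a b)) (T' r)⁻¹ (T r) := by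
  set W := invFunOn T (Ioo a b)
  have hWT : ∀ x ∈ Ioo a b, W (T x) = x := fun x hx => hT.injOn.leftInvOn_invFunOn hx
  have himage : T '' Ioo a b ∈ 𝓝 (T r) := by
    obtain ⟨p, hap, hpr⟩ := exists_between hr.1
    obtain ⟨q, hrq, hqb⟩ := exists_between hr.2
    have hsub : Icc p q ⊆ Ioo a b := Icc_subset_Ioo hap hqb
    have hcont : ContinuousOn T (Icc p q) := fun x hx =>
      (hderiv x (hsub hx)).continuousAt.continuousWithinAt
    refine mem_of_superset (Icc_mem_nhds ?_ ?_)
      ((intermediate_value_Icc (hpr.trans hrq).le hcont).trans (image_mono hsub))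
    · exact hT ⟨hap, hpr.trans hr.2⟩ hr hpr
    · exact hT hr ⟨hr.1.trans hrq, hqb⟩ hrq
  have hWmono : MonotoneOn W (T '' Ioo a b) := by
    rintro _ ⟨x, hx, rfl⟩ _ ⟨y, hy, rfl⟩ hxy
    rw [hWT x hx, hWT y hy]
    exact (hT.le_iff_le hx hy).1 hxy
  have hWcont : ContinuousAt W (T r) := by
    refine continuousAt_of_monotoneOn_of_image_mem_nhds hWmono himage ?_
    rw [hT.injOn.invFunOn_image subset_rfl, hWT r hr]
    exact Ioo_mem_nhds hr.1 hr.2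
  refine HasDerivAt.of_local_left_inverse (f := T) hWcont ?_ hT' ?_
  · rw [hWT r hr]
    exact hderiv r hr
  · filter_upwards [himage] with u hu
    exact invFunOn_eq hu

noncomputable def travelTime (g : ℝ → ℝ) (x₀ r : ℝ) : ℝ := ∫ x in x₀..r, (g x)⁻¹

section TravelTime

variable {g : ℝ → ℝ} {a b x₀ : ℝ}

theorem hasDerivAt_travelTime (hg : ContinuousOn g (Ioo a b)) (hpos : ∀ x ∈ Ioo a b, 0 < g x)
    (hx₀ : x₀ ∈ Ioo a b) {r : ℝ} (hr : r ∈ Ioo a b) :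
    HasDerivAt (travelTime g x₀) (g r)⁻¹ r := by
  have hinv : ContinuousOn (fun x => (g x)⁻¹) (Ioo a b) :=
    hg.inv₀ fun x hx => (hpos x hx).ne'
  exact intervalIntegral.integral_hasDerivAt_right
    ((hinv.mono (ordConnected_Ioo.uIcc_subset hx₀ hr)).intervalIntegrable)
    (hinv.stronglyMeasurableAtFilter isOpen_Ioo r hr) (hinv.continuousAt (Ioo_mem_nhds hr.1 hr.2))

theorem strictMonoOn_travelTime (hg : ContinuousOn g (Ioo a b))
    (hpos : ∀ x ∈ Ioo a b, 0 < g x) (hx₀ : x₀ ∈ Ioo a b) :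
    StrictMonoOn (travelTime g x₀) (Ioo a b) := by
  have hderiv := fun x (hx : x ∈ Ioo a b) => hasDerivAt_travelTime hg hpos hx₀ hx
  refine strictMonoOn_of_hasDerivWithinAt_pos (f' := fun x => (g x)⁻¹) (convex_Ioo a b)
    (fun x hx => (hderiv x hx).continuousAt.continuousWithinAt) (fun x hx => ?_) (fun x hx => ?_)
    <;> rw [interior_Ioo] at hx
  · exact (hderiv x hx).hasDerivWithinAt
  · exact inv_pos.2 (hpos x hx)

/-- Comparing `g` with `M * (b - x)`, the point `b - (b - x₀) * exp (-(M * u))` is reached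
no earlier than time `u`. -/
theorem exists_le_travelTime_of_le_mul_sub {M : ℝ} (hg : ContinuousOn g (Ioo a b))
    (hpos : ∀ x ∈ Ioo a b, 0 < g x) (hM : ∀ x ∈ Ico x₀ b, g x ≤ M * (b - x))
    (hx₀ : x₀ ∈ Ioo a b) {u : ℝ} (hu : 0 ≤ u) :
    ∃ r ∈ Ico x₀ b, u ≤ travelTime g x₀ r := by
  set r := b - (b - x₀) * exp (-(M * u))
  have hbx₀ : 0 < b - x₀ := sub_pos.2 hx₀.2
  have hM₀ : 0 < M :=
    pos_of_mul_pos_left ((hpos x₀ hx₀).trans_le (hM x₀ ⟨le_rfl, hx₀.2⟩)) hbx₀.le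
  have hbr : b - r = (b - x₀) * exp (-(M * u)) := by ring
  have hx₀r : x₀ ≤ r := by
    have : exp (-(M * u)) ≤ 1 := exp_le_one_iff.2 (by nlinarith)
    nlinarith
  have hrb : r < b := by have := exp_pos (-(M * u)); nlinarith
  have hsub : Icc x₀ r ⊆ Ioo a b := Icc_subset_Ioo hx₀.1 hrb
  have hcomp : ContinuousOn (fun x => (M * (b - x))⁻¹) (Icc x₀ r) :=
    (continuousOn_const.mul (continuousOn_const.sub continuousOn_id)).inv₀
      fun x hx => (mul_pos hM₀ (sub_pos.2 (hx.2.trans_lt hrb))).ne'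
  refine ⟨r, ⟨hx₀r, hrb⟩, ?_⟩
  calc u = M⁻¹ * log ((b - x₀) / (b - r)) := by
        rw [hbr, div_mul_cancel_left₀ hbx₀.ne', ← exp_neg, neg_neg, log_exp]
        field_simp
    _ = ∫ x in x₀..r, (M * (b - x))⁻¹ := by
        simp only [mul_inv, intervalIntegral.integral_const_mul]
        rw [intervalIntegral.integral_comp_sub_left (fun x => x⁻¹),
          integral_inv_of_pos (by linarith) hbx₀]
    _ ≤ travelTime g x₀ r := by
        refine intervalIntegral.integral_mono_on hx₀r (hcomp.intervalIntegrable_of_Icc hx₀r)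
          (((hg.inv₀ fun x hx => (hpos x hx).ne').mono hsub).intervalIntegrable_of_Icc hx₀r)
          fun x hx => inv_anti₀ (hpos x (hsub hx)) (hM x ⟨hx.1, hx.2.trans_lt hrb⟩)

theorem exists_travelTime_eq {M : ℝ} (hg : ContinuousOn g (Ioo a b))
    (hpos : ∀ x ∈ Ioo a b, 0 < g x) (hM : ∀ x ∈ Ico x₀ b, g x ≤ M * (b - x))
    (hx₀ : x₀ ∈ Ioo a b) {u : ℝ} (hu : 0 ≤ u) :
    ∃ r ∈ Ico x₀ b, travelTime g x₀ r = u := by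
  obtain ⟨r, hr, hur⟩ := exists_le_travelTime_of_le_mul_sub hg hpos hM hx₀ hu
  have hcont : ContinuousOn (travelTime g x₀) (Icc x₀ r) := fun x hx =>
    (hasDerivAt_travelTime hg hpos hx₀ ⟨hx₀.1.trans_le hx.1, hx.2.trans_lt hr.2⟩).continuousAt
      |>.continuousWithinAt
  have hT₀ : travelTime g x₀ x₀ = 0 := intervalIntegral.integral_same
  obtain ⟨x, hx, hxu⟩ := intermediate_value_Icc hr.1 hcont ⟨hT₀ ▸ hu, hur⟩
  exact ⟨x, ⟨hx.1, hx.2.trans_lt hr.2⟩, hxu⟩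

end TravelTime

theorem exists_hasDerivAt_tendsto_of_le_mul_sub {g : ℝ → ℝ} {a b x₀ M : ℝ}
    (hg : ContinuousOn g (Ioo a b)) (hpos : ∀ x ∈ Ioo a b, 0 < g x)
    (hM : ∀ x ∈ Ico x₀ b, g x ≤ M * (b - x)) (hx₀ : x₀ ∈ Ioo a b) :
    ∃ R : ℝ → ℝ, R 0 = x₀ ∧ (∀ t, 0 ≤ t → HasDerivAt R (g (R t)) t) ∧
      StrictMonoOn R (Ici 0) ∧ (∀ t, 0 ≤ t → x₀ ≤ R t ∧ R t < b) ∧ Tendsto R atTop (𝓝 b) := by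
  set T := travelTime g x₀
  have hT := strictMonoOn_travelTime hg hpos hx₀
  have hIco : Ico x₀ b ⊆ Ioo a b := Ico_subset_Ioo_left hx₀.1
  choose! ρ hρ hTρ using fun t (ht : 0 ≤ t) => exists_travelTime_eq hg hpos hM hx₀ ht
  have hRρ : ∀ t, 0 ≤ t → invFunOn T (Ioo a b) t = ρ t := fun t ht => by
    conv_lhs => rw [← hTρ t ht]
    exact hT.injOn.leftInvOn_invFunOn (hIco (hρ t ht))
  refine ⟨invFunOn T (Ioo a b), ?_, fun t ht => ?_, fun s hs t ht hst => ?_,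
    fun t ht => hRρ t ht ▸ hρ t ht, ?_⟩
  · rw [hRρ 0 le_rfl]
    refine hT.injOn (hIco (hρ 0 le_rfl)) hx₀ ?_
    rw [hTρ 0 le_rfl]
    exact intervalIntegral.integral_same.symm
  · have hderiv := hT.hasDerivAt_invFunOn (fun x hx => hasDerivAt_travelTime hg hpos hx₀ hx)
      (hIco (hρ t ht)) (inv_ne_zero (hpos _ (hIco (hρ t ht))).ne')
    rwa [inv_inv, hTρ t ht, ← hRρ t ht] at hderiv
  · rw [hRρ s hs, hRρ t ht, ← hT.lt_iff_lt (hIco (hρ s hs)) (hIco (hρ t ht)), hTρ s hs, hTρ t ht]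
    exact hst
  · refine tendsto_order.2 ⟨fun c hc => ?_, fun c hc => ?_⟩
    · obtain ⟨r, hcr, hr⟩ := exists_between (max_lt hc hx₀.2)
      have hr' : r ∈ Ico x₀ b := ⟨(le_max_right c x₀).trans hcr.le, hr⟩
      filter_upwards [eventually_ge_atTop (T r), eventually_ge_atTop 0] with t hTt ht
      rw [hRρ t ht]
      refine (le_max_left c x₀).trans_lt (hcr.trans_le ?_)
      rwa [← hT.le_iff_le (hIco hr') (hIco (hρ t ht)), hTρ t ht]
    · filter_upwards [eventually_ge_atTop 0] with t ht
      exact (hRρ t ht ▸ (hρ t ht).2).trans hc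

noncomputable def radialSpeed (R : ℝ) : ℝ := -1 / R + 1 / (R ^ 2 * log R ^ 2)

theorem radialSpeed_eq_div {r : ℝ} (hr : log r ≠ 0) :
    radialSpeed r = (1 - r * log r ^ 2) / (r ^ 2 * log r ^ 2) := by
  have hr₀ : r ≠ 0 := by rintro rfl; simp at hr
  rw [radialSpeed]
  field_simp
  ring

theorem continuousOn_radialSpeed : ContinuousOn radialSpeed (Ioi 1) := by
  intro r hr
  have hr₀ : r ≠ 0 := (zero_lt_one.trans hr).ne'
  have hlog : log r ≠ 0 := (log_pos hr).ne'
  unfold radialSpeed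
  fun_prop (disch := positivity)

/-- The tangent-line bound for the convex function `r ↦ r (log r)^2` on `[1, ∞)`. -/
theorem mul_log_sq_sub_le {r s : ℝ} (hr : 1 ≤ r) (hrs : r ≤ s) :
    s * log s ^ 2 - r * log r ^ 2 ≤ (s - r) * (log s ^ 2 + 2 * log s) := by
  have hr₀ : 0 < r := zero_lt_one.trans_le hr
  have hl : 0 ≤ log r := log_nonneg hr
  have hlL : log r ≤ log s := log_le_log hr₀ hrs
  have hgap : r * (log s - log r) ≤ s - r := calc
    r * (log s - log r) = r * log (s / r) := by rw [log_div (hr₀.trans_le hrs).ne' hr₀.ne']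
    _ ≤ r * (s / r - 1) := by
        gcongr
        exact log_le_sub_one_of_pos (div_pos (hr₀.trans_le hrs) hr₀)
    _ = s - r := by field_simp
  nlinarith [mul_le_mul_of_nonneg_right hgap (add_nonneg hl (hl.trans hlL))]

theorem mul_log_sq_lt_mul_log_sq {r s : ℝ} (hr : 1 < r) (hrs : r < s) :
    r * log r ^ 2 < s * log s ^ 2 := by
  have := log_lt_log (zero_lt_one.trans hr) hrs
  have := log_pos hr
  gcongr

section RadialSpeed

variable {Ropt R₀ r : ℝ}

theorem mul_log_sq_eq_one (hroot : log Ropt ^ 2 = 1 / Ropt) (hR : 0 < Ropt) :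
    Ropt * log Ropt ^ 2 = 1 := by
  rw [hroot]
  field_simp

theorem radialSpeed_pos (hroot : log Ropt ^ 2 = 1 / Ropt) (hr : 1 < r) (hrR : r < Ropt) :
    0 < radialSpeed r := by
  rw [radialSpeed_eq_div (log_pos hr).ne']
  have hlt := mul_log_sq_lt_mul_log_sq hr hrR
  rw [mul_log_sq_eq_one hroot (by linarith)] at hlt
  have := log_pos hr
  exact div_pos (sub_pos.2 hlt) (by positivity)

theorem radialSpeed_le_mul_sub (hroot : log Ropt ^ 2 = 1 / Ropt) (hR₀ : 1 < R₀) (hr : R₀ ≤ r)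
    (hrR : r ≤ Ropt) :
    radialSpeed r ≤
      (log Ropt ^ 2 + 2 * log Ropt) / (R₀ ^ 2 * log R₀ ^ 2) * (Ropt - r) := by
  have hr₁ : 1 < r := hR₀.trans_le hr
  have hlogR₀ := log_pos hR₀
  have hlog : log R₀ ≤ log r := log_le_log (by linarith) hr
  rw [radialSpeed_eq_div (log_pos hr₁).ne', div_mul_eq_mul_div, mul_comm _ (Ropt - r)]
  refine div_le_div₀ ?_ ?_ (by positivity) (by gcongr)
  · have := log_nonneg (hr₁.le.trans hrR)
    have := sub_nonneg.2 hrR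
    positivity
  · rw [← mul_log_sq_eq_one hroot (by linarith)]
    exact mul_log_sq_sub_le hr₁.le hrR

end RadialSpeed

theorem radial_flow_from_below_general (Ropt : ℝ)
    (hroot : (Real.log Ropt) ^ 2 = 1 / Ropt)
    (f : ℝ → ℝ) (hf : ∀ R : ℝ, f R = -1 / R + 1 / (R ^ 2 * (Real.log R) ^ 2))
    (R₀ : ℝ) (hR₀_gt : 1 < R₀) (hR₀_lt : R₀ < Ropt) :
    ∃ R : ℝ → ℝ, R 0 = R₀ ∧
      (∀ t : ℝ, 0 ≤ t → HasDerivAt R (f (R t)) t) ∧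
      StrictMonoOn R (Set.Ici (0 : ℝ)) ∧
      (∀ t : ℝ, 0 ≤ t → R₀ ≤ R t ∧ R t < Ropt) ∧
      Filter.Tendsto R Filter.atTop (nhds Ropt) := by
  obtain rfl : f = radialSpeed := funext hf
  exact exists_hasDerivAt_tendsto_of_le_mul_sub (a := 1)
    (continuousOn_radialSpeed.mono Ioo_subset_Ioi_self)
    (fun r hr => radialSpeed_pos hroot hr.1 hr.2)
    (fun r hr => radialSpeed_le_mul_sub hroot hR₀_gt hr.1 hr.2.le) ⟨hR₀_gt, hR₀_lt⟩

/-- For `R_opt` the unique root `> 1` of `(log R)^2 = 1/R`,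
`f(R) = -1/R + 1/(R^2 (log R)^2)`, and an initial radius `1 < R_0 < R_opt`, there
is a global solution `R(t)` of the ODE `R' = f(R)`, `R(0) = R_0`, which is strictly
increasing on `[0, ∞)`, stays in `[R_0, R_opt)`, and converges to `R_opt` as
`t → ∞`. -/
theorem radial_flow_from_below (Ropt : ℝ) (hRopt : 1 < Ropt)
    (hroot : (Real.log Ropt) ^ 2 = 1 / Ropt)
    (f : ℝ → ℝ) (hf : ∀ R : ℝ, f R = -1 / R + 1 / (R ^ 2 * (Real.log R) ^ 2))
    (R₀ : ℝ) (hR₀_gt : 1 < R₀) (hR₀_lt : R₀ < Ropt) :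
    ∃ R : ℝ → ℝ, R 0 = R₀ ∧
      (∀ t : ℝ, 0 ≤ t → HasDerivAt R (f (R t)) t) ∧
      StrictMonoOn R (Set.Ici (0 : ℝ)) ∧
      (∀ t : ℝ, 0 ≤ t → R₀ ≤ R t ∧ R t < Ropt) ∧
      Filter.Tendsto R Filter.atTop (nhds Ropt) :=
  radial_flow_from_below_general Ropt hroot f hf R₀ hR₀_gt hR₀_lt
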